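/- arXiv:1202.1432 — 2 statements merged into one kernel-verified Lean document; each statement's English description precedes it below -/
import Mathlib

section
/- Let δ ∈ (0, T), t₀, t₁ ∈ [0, T−δ], λ ∈ [0,1], t_λ = λ t₁ + (1−λ) t₀, and τ̇₁ = (T−t_λ)/(T−t₁). Then λ·|1 − 1/√τ̇₁| ≤ (1/(2δ))·λ(1−λ)·|t₀ − t₁|. -/
/-! With u = T − t₁ and v = T − t_λ, both at least δ, rationalising gives
1 − 1/√(v/u) = (v − u) / (√v (√v + √u)), whose denominator is at least 2δ,
while v − u = (1 − λ)(t₁ − t₀). -/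

open Real

lemma one_sub_inv_sqrt_div_eq {u v : ℝ} (hu : 0 ≤ u) (hv : 0 < v) :
    1 - 1 / √(v / u) = (v - u) / (√v * (√v + √u)) := by
  rw [sqrt_div' v hu, one_div_div]
  field_simp
  linear_combination sq_sqrt hv.le - sq_sqrt hu

lemma two_mul_le_sqrt_mul_sqrt_add_sqrt {δ u v : ℝ} (hδ : 0 ≤ δ) (hu : δ ≤ u) (hv : δ ≤ v) :
    2 * δ ≤ √v * (√v + √u) := by
  have hvv : √v * √v = v := mul_self_sqrt (hδ.trans hv)
  have hvu : δ ≤ √v * √u := by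
    rw [← sqrt_mul (hδ.trans hv), le_sqrt hδ (by nlinarith)]
    nlinarith
  nlinarith

lemma abs_one_sub_inv_sqrt_div_le {δ u v : ℝ} (hδ : 0 < δ) (hu : δ ≤ u) (hv : δ ≤ v) :
    |1 - 1 / √(v / u)| ≤ |v - u| / (2 * δ) := by
  have hden := two_mul_le_sqrt_mul_sqrt_add_sqrt hδ.le hu hv
  rw [one_sub_inv_sqrt_div_eq (hδ.le.trans hu) (hδ.trans_le hv), abs_div,
    abs_of_pos (a := √v * (√v + √u)) (by linarith)]
  gcongr

theorem sqrt_time_change_estimate_general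
    (T δ t₀ t₁ lam : ℝ) (hδ : 0 < δ)
    (ht₀ : t₀ ∈ Set.Icc 0 (T - δ)) (ht₁ : t₁ ∈ Set.Icc 0 (T - δ))
    (hlam : lam ∈ Set.Icc (0:ℝ) 1)
    (tlam : ℝ) (htlam : tlam = lam * t₁ + (1 - lam) * t₀)
    (τdot₁ : ℝ) (hτ₁ : τdot₁ = (T - tlam) / (T - t₁)) :
    lam * |1 - 1 / Real.sqrt τdot₁| ≤ (1 / (2 * δ)) * (lam * (1 - lam)) * |t₀ - t₁| := by
  obtain ⟨hl0, hl1⟩ := hlam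
  have htlam_le : tlam ≤ T - δ := by
    rw [htlam]; nlinarith [ht₀.2, ht₁.2]
  have hdiff : |(T - tlam) - (T - t₁)| = (1 - lam) * |t₀ - t₁| := by
    rw [show (T - tlam) - (T - t₁) = (1 - lam) * (t₁ - t₀) by rw [htlam]; ring, abs_mul,
      abs_of_nonneg (sub_nonneg.mpr hl1), abs_sub_comm]
  have hbound := abs_one_sub_inv_sqrt_div_le hδ (by linarith [ht₁.2] : δ ≤ T - t₁)
    (by linarith : δ ≤ T - tlam)
  rw [← hτ₁, hdiff] at hbound
  calc lam * |1 - 1 / √τdot₁| ≤ lam * ((1 - lam) * |t₀ - t₁| / (2 * δ)) := by gcongr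
    _ = (1 / (2 * δ)) * (lam * (1 - lam)) * |t₀ - t₁| := by ring

theorem sqrt_time_change_estimate
    (T δ t₀ t₁ lam : ℝ) (hδ : 0 < δ) (hδT : δ < T)
    (ht₀ : t₀ ∈ Set.Icc 0 (T - δ)) (ht₁ : t₁ ∈ Set.Icc 0 (T - δ))
    (hlam : lam ∈ Set.Icc (0:ℝ) 1)
    (tlam : ℝ) (htlam : tlam = lam * t₁ + (1 - lam) * t₀)
    (τdot₁ : ℝ) (hτ₁ : τdot₁ = (T - tlam) / (T - t₁)) :
    lam * |1 - 1 / Real.sqrt τdot₁| ≤ (1 / (2 * δ)) * (lam * (1 - lam)) * |t₀ - t₁| :=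
  sqrt_time_change_estimate_general T δ t₀ t₁ lam hδ ht₀ ht₁ hlam tlam htlam τdot₁ hτ₁
end

section
/- Let δ ∈ (0, T), t₀, t₁ ∈ [0, T−δ], λ ∈ [0,1], t_λ = λ t₁ + (1−λ) t₀, and for i = 0,1 set τ̇ᵢ = (T−t_λ)/(T−tᵢ). Then |λ·(1 − 1/√τ̇₁) + (1−λ)·(1 − 1/√τ̇₀)| ≤ (1/δ²)·λ(1−λ)·|t₁ − t₀|². -/
/-!
Put `a = T - t₀`, `b = T - t₁` and `m = T - t_λ = λ b + (1 - λ) a`. Since `1 / √τ̇ᵢ = √(T - tᵢ) / √m`,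
the quantity is `1 - s / √m` with `s = λ √b + (1 - λ) √a`, the relative concavity defect of `√`.
It factors as `(√m - s)(√m + s) = m - s² = λ(1 - λ)(√a - √b)²`, and
`(√a - √b)² = (a - b)² / (√a + √b)²`. As `a`, `b`, `m ≥ δ`, every square root involved is at least `√δ`,
which bounds the defect by `λ(1 - λ)(a - b)² / (8δ²)`.
-/

open Real

lemma sq_sqrt_sub_sqrt_le {δ x y : ℝ} (hδ : 0 < δ) (hx : δ ≤ x) (hy : δ ≤ y) :
    (√x - √y) ^ 2 ≤ (x - y) ^ 2 / (4 * δ) := by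
  have hsum : 2 * √δ ≤ √x + √y := by
    linarith [sqrt_le_sqrt hx, sqrt_le_sqrt hy]
  have h4δ : 4 * δ ≤ (√x + √y) ^ 2 := by
    nlinarith [sq_sqrt hδ.le, sqrt_nonneg δ]
  have hfactor : (√x - √y) * (√x + √y) = x - y := by
    linear_combination sq_sqrt (hδ.le.trans hx) - sq_sqrt (hδ.le.trans hy)
  rw [le_div_iff₀ (by positivity), ← hfactor, mul_pow]
  exact mul_le_mul_of_nonneg_left h4δ (sq_nonneg _)

lemma sqrt_convexComb_sub_mul_add {x y lam : ℝ} (hx : 0 ≤ x) (hy : 0 ≤ y)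
    (hm : 0 ≤ lam * x + (1 - lam) * y) :
    (√(lam * x + (1 - lam) * y) - (lam * √x + (1 - lam) * √y)) *
      (√(lam * x + (1 - lam) * y) + (lam * √x + (1 - lam) * √y))
      = lam * (1 - lam) * (√x - √y) ^ 2 := by
  linear_combination sq_sqrt hm - lam * sq_sqrt hx - (1 - lam) * sq_sqrt hy

lemma abs_one_sub_convexComb_sqrt_div_sqrt_le {δ x y lam : ℝ} (hδ : 0 < δ) (hx : δ ≤ x)
    (hy : δ ≤ y) (h0 : 0 ≤ lam) (h1 : lam ≤ 1) :
    |1 - (lam * √x + (1 - lam) * √y) / √(lam * x + (1 - lam) * y)|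
      ≤ lam * (1 - lam) * (x - y) ^ 2 / (8 * δ ^ 2) := by
  have hgap := sqrt_convexComb_sub_mul_add (hδ.le.trans hx) (hδ.le.trans hy)
    (by nlinarith : 0 ≤ lam * x + (1 - lam) * y)
  set m := lam * x + (1 - lam) * y
  set s := lam * √x + (1 - lam) * √y
  have hδm : √δ ≤ √m := sqrt_le_sqrt (by nlinarith)
  have hδs : √δ ≤ s := by nlinarith [sqrt_le_sqrt hx, sqrt_le_sqrt hy]
  have hδpos : 0 < √δ := sqrt_pos.2 hδ
  have hden : 2 * δ ≤ (√m + s) * √m := by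
    nlinarith [sq_sqrt hδ.le, mul_le_mul (add_le_add hδm hδs) hδm hδpos.le (by linarith)]
  have hform : 1 - s / √m = lam * (1 - lam) * (√x - √y) ^ 2 / ((√m + s) * √m) := by
    have hm_pos : 0 < √m := hδpos.trans_le hδm
    have hsum_pos : 0 < √m + s := by linarith
    rw [← hgap]
    field_simp
  rw [hform, abs_of_nonneg (by positivity)]
  calc lam * (1 - lam) * (√x - √y) ^ 2 / ((√m + s) * √m)
      ≤ lam * (1 - lam) * ((x - y) ^ 2 / (4 * δ)) / (2 * δ) := by
        gcongr
        exact sq_sqrt_sub_sqrt_le hδ hx hy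
    _ = lam * (1 - lam) * (x - y) ^ 2 / (8 * δ ^ 2) := by
        field_simp
        ring

theorem sqrt_time_change_second_order_estimate_general
    (T δ t₀ t₁ lam : ℝ) (hδ : 0 < δ)
    (ht₀ : t₀ ∈ Set.Icc 0 (T - δ)) (ht₁ : t₁ ∈ Set.Icc 0 (T - δ))
    (hlam : lam ∈ Set.Icc (0:ℝ) 1)
    (tlam : ℝ) (htlam : tlam = lam * t₁ + (1 - lam) * t₀)
    (τdot₀ τdot₁ : ℝ)
    (hτ₀ : τdot₀ = (T - tlam) / (T - t₀)) (hτ₁ : τdot₁ = (T - tlam) / (T - t₁)) :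
    |lam * (1 - 1 / Real.sqrt τdot₁) + (1 - lam) * (1 - 1 / Real.sqrt τdot₀)|
      ≤ (1 / δ ^ 2) * (lam * (1 - lam)) * |t₁ - t₀| ^ 2 := by
  obtain ⟨hlam0, hlam1⟩ := hlam
  have hδ₁ : δ ≤ T - t₁ := by linarith [ht₁.2]
  have hδ₀ : δ ≤ T - t₀ := by linarith [ht₀.2]
  have hm : T - tlam = lam * (T - t₁) + (1 - lam) * (T - t₀) := by rw [htlam]; ring
  have hm0 : 0 ≤ T - tlam := by nlinarith
  have hweighted : lam * (1 - 1 / √τdot₁) + (1 - lam) * (1 - 1 / √τdot₀)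
      = 1 - (lam * √(T - t₁) + (1 - lam) * √(T - t₀)) / √(T - tlam) := by
    rw [hτ₀, hτ₁, sqrt_div hm0, sqrt_div hm0, one_div_div, one_div_div]
    ring
  rw [hweighted, hm]
  calc _ ≤ lam * (1 - lam) * ((T - t₁) - (T - t₀)) ^ 2 / (8 * δ ^ 2) :=
        abs_one_sub_convexComb_sqrt_div_sqrt_le hδ hδ₁ hδ₀ hlam0 hlam1
    _ = 1 / δ ^ 2 * (lam * (1 - lam)) * |t₁ - t₀| ^ 2 / 8 := by
        rw [sq_abs]
        field_simp
        ring
    _ ≤ 1 / δ ^ 2 * (lam * (1 - lam)) * |t₁ - t₀| ^ 2 :=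
        div_le_self (by positivity) (by norm_num)

theorem sqrt_time_change_second_order_estimate
    (T δ t₀ t₁ lam : ℝ) (hδ : 0 < δ) (hδT : δ < T)
    (ht₀ : t₀ ∈ Set.Icc 0 (T - δ)) (ht₁ : t₁ ∈ Set.Icc 0 (T - δ))
    (hlam : lam ∈ Set.Icc (0:ℝ) 1)
    (tlam : ℝ) (htlam : tlam = lam * t₁ + (1 - lam) * t₀)
    (τdot₀ τdot₁ : ℝ)
    (hτ₀ : τdot₀ = (T - tlam) / (T - t₀)) (hτ₁ : τdot₁ = (T - tlam) / (T - t₁)) :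
    |lam * (1 - 1 / Real.sqrt τdot₁) + (1 - lam) * (1 - 1 / Real.sqrt τdot₀)|
      ≤ (1 / δ ^ 2) * (lam * (1 - lam)) * |t₁ - t₀| ^ 2 :=
  sqrt_time_change_second_order_estimate_general T δ t₀ t₁ lam hδ ht₀ ht₁ hlam tlam htlam τdot₀
    τdot₁ hτ₀ hτ₁
end
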